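/- Let M ≥ N ≥ 1 be integers and set α = 2(M−N). Define φ_{2N−2}(x) = ∑_{k=0}^{N−1} ( ∏_{i=1}^k (2i−1)/(2i+α) ) · L_{2k}^{(α)}(2Mx) and ψ_{2N−2}(x) = φ_{2N−2}(x) · x^{M−N+1/2} e^{−Mx}. Then for every x > 0: ψ_{2N−2}(x) = −((2N−1)/2) · ( ∏_{j=1}^{N−1} (2j−1)/(2j+α) ) · ∫_x^∞ t^{M−N−1/2} e^{−Mt} L_{2N−1}^{(α)}(2Mt) dt. -/

import Mathlib

set_option maxHeartbeats 1000000

open MeasureTheory Real Finset Filter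

/-- Generalized Laguerre polynomial `L_n^{(α)}`. -/
noncomputable def Lag (n α : ℕ) (x : ℝ) : ℝ :=
  ∑ k ∈ Finset.range (n+1),
    (-1:ℝ)^k * (Nat.choose (n+α) (n-k) : ℝ) * x^k / (Nat.factorial k : ℝ)

namespace Stmt5Aux

noncomputable def Lc (α n k : ℕ) : ℝ :=
  if k ≤ n then (-1:ℝ)^k * ((n+α).choose (n-k) : ℝ) / (k.factorial : ℝ) else 0
lemma Lc_of_le (α n k : ℕ) (h : k ≤ n) :
    Lc α n k = (-1:ℝ)^k * ((n+α).choose (n-k) : ℝ) / (k.factorial : ℝ) := if_pos h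
lemma Lc_of_gt (α n k : ℕ) (h : n < k) : Lc α n k = 0 := if_neg (by omega)
lemma chooseR (a b : ℕ) : ((a+b).choose b : ℝ) = ((a+b).factorial : ℝ) / ((a.factorial : ℝ) * (b.factorial : ℝ)) := by
  have : (a+b).choose b = (a+b).choose a := by
    rw [← Nat.choose_symm (Nat.le_add_right a b)]; congr 1; omega
  rw [this, Nat.cast_add_choose]
lemma chooseR' (x b : ℕ) (h : b ≤ x) :
    ((x.choose b : ℕ) : ℝ) = (x.factorial : ℝ) / (((x-b).factorial : ℝ) * (b.factorial : ℝ)) := by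
  obtain ⟨a, rfl⟩ : ∃ a, x = a + b := ⟨x - b, by omega⟩
  rw [Nat.add_sub_cancel, chooseR]
lemma factS (a : ℕ) : ((a+1).factorial : ℝ) = ((a:ℝ)+1) * (a.factorial : ℝ) := by
  rw [Nat.factorial_succ]; push_cast; ring
lemma factne (a : ℕ) : ((a.factorial : ℕ) : ℝ) ≠ 0 := by
  exact_mod_cast Nat.factorial_ne_zero a

lemma coeff_id (α n j : ℕ) (hn : 1 ≤ n) :
    (2*(j:ℝ) + (α:ℝ) + 1) * Lc α n j - (if j = 0 then (0:ℝ) else Lc α n (j-1))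
      = ((n:ℝ)+1) * Lc α (n+1) j - ((n:ℝ)+(α:ℝ)) * Lc α (n-1) j := by
  obtain ⟨n', rfl⟩ : ∃ n', n = n'+1 := ⟨n-1, by omega⟩
  rcases lt_trichotomy j (n'+1) with hj | rfl | hj
  · rcases Nat.eq_zero_or_pos j with rfl | hj0
    · -- j = 0
      rw [if_pos rfl, sub_zero, show n'+1-1 = n' by omega]
      rw [Lc_of_le α (n'+1) 0 (by omega), Lc_of_le α (n'+2) 0 (by omega),
          Lc_of_le α n' 0 (by omega)]
      simp only [Nat.sub_zero, pow_zero, Nat.factorial_zero]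
      rw [chooseR' _ _ (by omega), chooseR' _ _ (by omega), chooseR' _ _ (by omega),
          show n'+1+α - (n'+1) = α by omega, show n'+2+α - (n'+2) = α by omega,
          show n'+α - n' = α by omega]
      rw [show n'+2+α = ((n'+α)+1)+1 by omega, show n'+1+α = (n'+α)+1 by omega,
          show n'+2 = (n'+1)+1 by omega]
      simp only [factS]
      have h1 := factne (n'+α); have h2 := factne n'; have h3 := factne α
      push_cast
      field_simp
      ring
    · -- 1 ≤ j ≤ n'
      obtain ⟨j', rfl⟩ : ∃ j', j = j'+1 := ⟨j-1, by omega⟩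
      obtain ⟨d, rfl⟩ : ∃ d, n' = j'+1+d := ⟨n'-(j'+1), by omega⟩
      simp only [if_neg (Nat.succ_ne_zero j'), Nat.add_sub_cancel]
      rw [Lc_of_le α _ _ (by omega), Lc_of_le α _ _ (by omega), Lc_of_le α _ _ (by omega),
          Lc_of_le α _ _ (by omega)]
      rw [chooseR' _ _ (by omega), chooseR' _ _ (by omega), chooseR' _ _ (by omega),
          chooseR' _ _ (by omega)]
      rw [show j'+1+d+1 - (j'+1) = d+1 by omega,
          show j'+1+d+1 - j' = d+2 by omega,
          show j'+1+d+1+1 - (j'+1) = d+2 by omega,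
          show j'+1+d - (j'+1) = d by omega]
      rw [show j'+1+d+1+α - (d+1) = (j'+α)+1 by omega,
          show j'+1+d+1+α - (d+2) = j'+α by omega,
          show j'+1+d+1+1+α - (d+2) = (j'+α)+1 by omega,
          show j'+1+d+α - d = (j'+α)+1 by omega]
      rw [show j'+1+d+1+1+α = (((j'+d+α)+1)+1)+1 by omega,
          show j'+1+d+1+α = ((j'+d+α)+1)+1 by omega,
          show j'+1+d+α = (j'+d+α)+1 by omega]
      rw [show d+2 = (d+1)+1 by omega, show j'+1 = j'+1 from rfl]
      simp only [factS, pow_succ]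
      have h1 := factne (j'+d+α); have h2 := factne j'; have h3 := factne d
      have h4 := factne (j'+α)
      push_cast
      field_simp
      ring
  · -- j = n'+1
    rw [if_neg (Nat.succ_ne_zero n'), Nat.add_sub_cancel]
    rw [Lc_of_le α _ _ (by omega), Lc_of_le α _ _ (by omega), Lc_of_le α _ _ (by omega),
        Lc_of_gt α n' (n'+1) (by omega)]
    rw [show n'+1 - (n'+1) = 0 by omega, show n'+1 - n' = 1 by omega,
        show n'+1+1 - (n'+1) = 1 by omega,
        Nat.choose_zero_right, Nat.choose_one_right, Nat.choose_one_right]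
    simp only [factS, pow_succ]
    have h2 := factne n'
    push_cast
    field_simp
    ring
  · rcases Nat.lt_or_ge j (n'+3) with hj2 | hj2
    · -- j = n'+2
      obtain rfl : j = n'+2 := by omega
      rw [if_neg (by omega), show n'+2-1 = n'+1 by omega, show n'+1-1 = n' by omega]
      rw [Lc_of_gt α _ _ (by omega), Lc_of_le α _ _ (by omega), Lc_of_le α _ _ (by omega),
          Lc_of_gt α n' _ (by omega)]
      rw [show n'+1 - (n'+1) = 0 by omega, show n'+1+1 - (n'+1+1) = 0 by omega,
          Nat.choose_zero_right, Nat.choose_zero_right]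
      simp only [factS, pow_succ]
      have h2 := factne n'
      push_cast
      field_simp
      ring
    ·
      rw [show n'+1-1 = n' by omega, Lc_of_gt α _ _ (by omega), Lc_of_gt α _ _ (by omega),
          Lc_of_gt α _ _ (by omega), if_neg (by omega), Lc_of_gt α n' _ (by omega)]
      ring

lemma Lag_eq (n α : ℕ) (x : ℝ) {m : ℕ} (hm : n+1 ≤ m) :
    Lag n α x = ∑ k ∈ Finset.range m, Lc α n k * x^k := by
  rw [Lag, ← Finset.sum_subset (Finset.range_subset_range.2 hm)
    (fun k _ hk' => by rw [Lc_of_gt α n k (by simp at hk'; omega), zero_mul])]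
  apply Finset.sum_congr rfl
  intro k hk
  rw [Lc_of_le α n k (by simp at hk; omega)]
  ring

/-- formal derivative coefficient sum -/
noncomputable def Dsum (n α : ℕ) (u : ℝ) : ℝ :=
  ∑ k ∈ Finset.range (n+1), Lc α n k * ((k:ℝ) * u^(k-1))

lemma hasDerivAt_Lag (n α : ℕ) (u : ℝ) :
    HasDerivAt (fun x => Lag n α x) (Dsum n α u) u := by
  have : (fun x => Lag n α x) = fun x => ∑ k ∈ Finset.range (n+1), Lc α n k * x^k :=
    funext fun x => Lag_eq n α x le_rfl
  rw [this, Dsum]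
  apply HasDerivAt.fun_sum
  intro k _
  exact (hasDerivAt_pow k u).const_mul _

lemma star (α n : ℕ) (hn : 1 ≤ n) (u : ℝ) :
    2*u*(Dsum n α u) + ((α:ℝ)+1-u) * Lag n α u
      = ((n:ℝ)+1) * Lag (n+1) α u - ((n:ℝ)+(α:ℝ)) * Lag (n-1) α u := by
  have hL : Lag n α u = ∑ k ∈ Finset.range (n+2), Lc α n k * u^k := Lag_eq n α u (by omega)
  have hL1 : Lag (n+1) α u = ∑ k ∈ Finset.range (n+2), Lc α (n+1) k * u^k :=
    Lag_eq (n+1) α u le_rfl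
  have hL0 : Lag (n-1) α u = ∑ k ∈ Finset.range (n+2), Lc α (n-1) k * u^k :=
    Lag_eq (n-1) α u (by omega)
  have hD : 2*u*(Dsum n α u) = ∑ k ∈ Finset.range (n+2), 2*(k:ℝ)*Lc α n k * u^k := by
    rw [Dsum, Finset.mul_sum, Finset.sum_range_succ (f := fun k => 2*(k:ℝ)*Lc α n k * u^k),
        Lc_of_gt α n (n+1) (by omega)]
    rw [show (2*((n+1 :ℕ):ℝ)*(0:ℝ) * u^(n+1) : ℝ) = 0 by ring, add_zero]
    apply Finset.sum_congr rfl
    intro k _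
    cases k with
    | zero => simp
    | succ m => simp only [Nat.add_sub_cancel, Nat.cast_succ, pow_succ]; ring
  have hshift : u * Lag n α u
      = ∑ j ∈ Finset.range (n+2), (if j = 0 then (0:ℝ) else Lc α n (j-1)) * u^j := by
    rw [Lag_eq n α u (le_refl (n+1)), Finset.mul_sum,
      Finset.sum_range_succ' (fun j => (if j = 0 then (0:ℝ) else Lc α n (j-1)) * u^j) (n+1)]
    simp only [Nat.succ_ne_zero, if_false, if_true, Nat.add_sub_cancel, zero_mul, add_zero]
    apply Finset.sum_congr rfl
    intro k _
    rw [pow_succ]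
    ring
  have expand : ((α:ℝ)+1-u) * Lag n α u
      = (∑ j ∈ Finset.range (n+2), ((α:ℝ)+1) * Lc α n j * u^j)
        - ∑ j ∈ Finset.range (n+2), (if j = 0 then (0:ℝ) else Lc α n (j-1)) * u^j := by
    rw [sub_mul, hshift, hL, Finset.mul_sum]
    congr 1
    exact Finset.sum_congr rfl fun j _ => by ring
  rw [hD, expand, hL1, hL0, Finset.mul_sum, Finset.mul_sum, ← Finset.sum_sub_distrib,
      ← Finset.sum_add_distrib, ← Finset.sum_sub_distrib]
  apply Finset.sum_congr rfl
  intro j _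
  have h := coeff_id α n j hn
  have hj := congrArg (· * u^j) h
  linear_combination hj

noncomputable def cc (α k : ℕ) : ℝ := ∏ i ∈ Finset.Icc 1 k, ((2*(i:ℝ)-1)/(2*(i:ℝ)+(α:ℝ)))

lemma cc_succ (α k : ℕ) :
    cc α (k+1) = cc α k * ((2*((k:ℝ)+1)-1)/(2*((k:ℝ)+1)+(α:ℝ))) := by
  rw [cc, cc, Finset.prod_Icc_succ_top (by omega)]
  push_cast
  ring

lemma sum_star (α Nn : ℕ) (hN : 1 ≤ Nn) (u : ℝ) :
    ∑ k ∈ Finset.range Nn, cc α k * (2*u*(Dsum (2*k) α u) + ((α:ℝ)+1-u) * Lag (2*k) α u)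
      = cc α (Nn-1) * (2*(Nn:ℝ)-1) * Lag (2*Nn-1) α u := by
  obtain ⟨N', rfl⟩ : ∃ N', Nn = N'+1 := ⟨Nn-1, by omega⟩
  set T : ℕ → ℝ := fun k => cc α k * (2*(k:ℝ)+1) * Lag (2*k+1) α u with hT
  have hstep : ∀ k : ℕ, cc α (k+1) * (2*u*(Dsum (2*(k+1)) α u) + ((α:ℝ)+1-u) * Lag (2*(k+1)) α u)
      = T (k+1) - T k := by
    intro k
    have hs := star α (2*(k+1)) (by omega) u
    have hden : (2*((k:ℝ)+1)+(α:ℝ)) ≠ 0 := by positivity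
    have hcc := cc_succ α k
    have h1 : cc α (k+1) * (2*((k:ℝ)+1)+(α:ℝ)) = cc α k * (2*(k:ℝ)+1) := by
      rw [hcc, mul_assoc, div_mul_cancel₀ _ hden]
      ring
    rw [hs, hT]
    simp only
    rw [show 2*(k+1)-1 = 2*k+1 by omega]
    push_cast
    linear_combination (-(Lag (2*k+1) α u)) * h1
  have h0 : cc α 0 * (2*u*(Dsum 0 α u) + ((α:ℝ)+1-u) * Lag 0 α u) = T 0 := by
    have hc0 : cc α 0 = 1 := by simp [cc]
    have hd0 : Dsum 0 α u = 0 := by simp [Dsum]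
    have hl0 : Lag 0 α u = 1 := by simp [Lag]
    have hl1 : Lag 1 α u = ((α:ℝ)+1) - u := by
      simp [Lag, Finset.sum_range_succ, Nat.choose_one_right]
      push_cast
      ring
    rw [hT]
    simp only [hc0, hd0, hl0, Nat.cast_zero, mul_zero, mul_one, hl1]
    norm_num
  rw [Finset.sum_range_succ'
    (fun k => cc α k * (2*u*(Dsum (2*k) α u) + ((α:ℝ)+1-u) * Lag (2*k) α u)) N']
  rw [Finset.sum_congr rfl (fun i _ => hstep i), Finset.sum_range_sub T N', h0]
  rw [show N'+1-1 = N' by omega, show 2*(N'+1)-1 = 2*N'+1 by omega, hT]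
  simp only
  push_cast
  ring

end Stmt5Aux

open Stmt5Aux

theorem stmt5 (M N : ℕ) (hN : 1 ≤ N) (hMN : N ≤ M) (x : ℝ) (hx : 0 < x) :
    (∑ k ∈ Finset.range N,
      (∏ i ∈ Finset.Icc 1 k, ((2*(i:ℝ) - 1)/(2*(i:ℝ) + ((2*(M-N) : ℕ) : ℝ)))) *
        Lag (2*k) (2*(M-N)) (2*(M:ℝ)*x)) *
      x ^ ((M:ℝ) - (N:ℝ) + 1/2) * Real.exp (-(M:ℝ)*x) =
    -((2*(N:ℝ) - 1)/2) *
      (∏ j ∈ Finset.Icc 1 (N-1), ((2*(j:ℝ) - 1)/(2*(j:ℝ) + ((2*(M-N) : ℕ) : ℝ)))) *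
      ∫ t in Set.Ioi x,
        t ^ ((M:ℝ) - (N:ℝ) - 1/2) * Real.exp (-(M:ℝ)*t) *
          Lag (2*N-1) (2*(M-N)) (2*(M:ℝ)*t) := by
  have hM : (0:ℝ) < M := by
    have : 1 ≤ M := le_trans hN hMN
    exact_mod_cast Nat.lt_of_lt_of_le Nat.zero_lt_one this
  have hNM : (N:ℝ) ≤ (M:ℝ) := Nat.cast_le.2 hMN
  set α : ℕ := 2*(M-N) with hαdef
  have hα : (α:ℝ) = 2*((M:ℝ)-(N:ℝ)) := by
    rw [hαdef]; push_cast [Nat.cast_sub hMN]; ring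
  set β : ℝ := (M:ℝ)-(N:ℝ)+1/2 with hβdef
  set ψ : ℝ → ℝ := fun t =>
    (∑ k ∈ Finset.range N, cc α k * Lag (2*k) α (2*(M:ℝ)*t)) * t ^ β * Real.exp (-(M:ℝ)*t)
    with hψdef
  set g : ℝ → ℝ := fun t =>
    t ^ ((M:ℝ)-(N:ℝ)-1/2) * Real.exp (-(M:ℝ)*t) * Lag (2*N-1) α (2*(M:ℝ)*t) with hgdef
  set K : ℝ := ((2*(N:ℝ)-1)/2) * cc α (N-1) with hKdef
  -- derivative
  have hderiv : ∀ t : ℝ, 0 < t → HasDerivAt ψ (K * g t) t := by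
    intro t ht
    have hlin : HasDerivAt (fun s:ℝ => 2*(M:ℝ)*s) (2*(M:ℝ)) t := by
      simpa using (hasDerivAt_id t).const_mul (2*(M:ℝ))
    have hF : HasDerivAt (fun s : ℝ => ∑ k ∈ Finset.range N, cc α k * Lag (2*k) α (2*(M:ℝ)*s))
        (∑ k ∈ Finset.range N, cc α k * (Dsum (2*k) α (2*(M:ℝ)*t) * (2*(M:ℝ)))) t := by
      apply HasDerivAt.fun_sum
      intro k _
      exact ((hasDerivAt_Lag (2*k) α (2*(M:ℝ)*t)).comp t hlin).const_mul _
    have hG : HasDerivAt (fun s:ℝ => s ^ β) (β * t^(β-1)) t :=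
      Real.hasDerivAt_rpow_const (Or.inl ht.ne')
    have hE : HasDerivAt (fun s:ℝ => Real.exp (-(M:ℝ)*s)) (Real.exp (-(M:ℝ)*t) * (-(M:ℝ))) t := by
      have h2 : HasDerivAt (fun s:ℝ => -(M:ℝ)*s) (-(M:ℝ)) t := by
        simpa using (hasDerivAt_id t).const_mul (-(M:ℝ))
      exact h2.exp
    have hψd := (hF.mul hG).mul hE
    refine hψd.congr_deriv ?_
    symm
    simp only [Pi.mul_apply]
    have key : 2*(2*(M:ℝ)*t)*(∑ k ∈ Finset.range N, cc α k * Dsum (2*k) α (2*(M:ℝ)*t))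
        + ((α:ℝ)+1-(2*(M:ℝ)*t)) * (∑ k ∈ Finset.range N, cc α k * Lag (2*k) α (2*(M:ℝ)*t))
        = cc α (N-1) * (2*(N:ℝ)-1) * Lag (2*N-1) α (2*(M:ℝ)*t) := by
      rw [Finset.mul_sum, Finset.mul_sum, ← Finset.sum_add_distrib, ← sum_star α N hN (2*(M:ℝ)*t)]
      exact Finset.sum_congr rfl fun k _ => by ring
    have hpow : t ^ β = t^(β-1) * t := by
      rw [← Real.rpow_add_one ht.ne', sub_add_cancel]
    have hβα : 2*β = (α:ℝ)+1 := by rw [hβdef, hα]; ring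
    rw [hgdef]
    simp only
    rw [show (M:ℝ)-(N:ℝ)-1/2 = β - 1 by rw [hβdef]; ring]
    have hS : (∑ k ∈ Finset.range N, cc α k * (Dsum (2*k) α (2*(M:ℝ)*t) * (2*(M:ℝ))))
        = 2*(M:ℝ)*(∑ k ∈ Finset.range N, cc α k * Dsum (2*k) α (2*(M:ℝ)*t)) := by
      rw [Finset.mul_sum]; exact Finset.sum_congr rfl fun k _ => by ring
    rw [hpow]
    linear_combination (-(t^(β-1) * Real.exp (-(M:ℝ)*t) * t)) * hS + (-(t^(β-1) * Real.exp (-(M:ℝ)*t)) / 2) * key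
      - (t^(β-1) * Real.exp (-(M:ℝ)*t)
          * (∑ k ∈ Finset.range N, cc α k * Lag (2*k) α (2*(M:ℝ)*t)) / 2) * hβα
  -- integrability
  have hgint : IntegrableOn g (Set.Ioi x) := by
    have base : ∀ k : ℕ, IntegrableOn
        (fun t:ℝ => t ^ ((M:ℝ)-(N:ℝ)-1/2 + k) * Real.exp (-(M:ℝ)*t)) (Set.Ioi 0) := by
      intro k
      have hs : (-1:ℝ) < (M:ℝ)-(N:ℝ)-1/2 + k := by
        have := Nat.cast_nonneg (α := ℝ) k
        linarith
      have := integrableOn_rpow_mul_exp_neg_mul_rpow (p := 1) (b := (M:ℝ)) hs one_pos hM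
      simpa [Real.rpow_one] using this
    have hsum : IntegrableOn (fun t:ℝ => ∑ k ∈ Finset.range (2*N-1+1),
        Lc α (2*N-1) k * (2*(M:ℝ))^k * (t ^ ((M:ℝ)-(N:ℝ)-1/2 + k) * Real.exp (-(M:ℝ)*t)))
        (Set.Ioi x) := by
      apply MeasureTheory.integrable_finset_sum
      intro k _
      exact (((base k).mono_set (Set.Ioi_subset_Ioi hx.le)).const_mul _)
    apply hsum.congr_fun ?_ measurableSet_Ioi
    intro t ht
    have ht0 : (0:ℝ) < t := lt_trans hx ht
    simp only [hgdef]
    rw [Lag_eq (2*N-1) α (2*(M:ℝ)*t) le_rfl, Finset.mul_sum]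
    apply Finset.sum_congr rfl
    intro k _
    rw [Real.rpow_add ht0, Real.rpow_natCast, mul_pow]
    ring
  have hint : IntegrableOn (fun t => K * g t) (Set.Ioi x) := hgint.const_mul K
  -- limit at infinity
  have htend : Filter.Tendsto ψ Filter.atTop (nhds 0) := by
    have each : ∀ s : ℝ, Filter.Tendsto (fun t:ℝ => t ^ s * Real.exp (-(M:ℝ)*t))
        Filter.atTop (nhds 0) := fun s => tendsto_rpow_mul_exp_neg_mul_atTop_nhds_zero s _ hM
    have big : Filter.Tendsto (fun t:ℝ => ∑ k ∈ Finset.range N, cc α k *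
        ∑ i ∈ Finset.range (2*k+1), Lc α (2*k) i * (2*(M:ℝ))^i * (t ^ (β+i) * Real.exp (-(M:ℝ)*t)))
        Filter.atTop (nhds 0) := by
      have : Filter.Tendsto (fun t:ℝ => ∑ k ∈ Finset.range N, cc α k *
          ∑ i ∈ Finset.range (2*k+1), Lc α (2*k) i * (2*(M:ℝ))^i * (t ^ (β+i) * Real.exp (-(M:ℝ)*t)))
          Filter.atTop (nhds (∑ k ∈ Finset.range N, cc α k *
          ∑ i ∈ Finset.range (2*k+1), Lc α (2*k) i * (2*(M:ℝ))^i * 0)) := by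
        apply tendsto_finset_sum
        intro k _
        apply Filter.Tendsto.const_mul
        have : Filter.Tendsto (fun t:ℝ => ∑ i ∈ Finset.range (2*k+1),
            Lc α (2*k) i * (2*(M:ℝ))^i * (t ^ (β+i) * Real.exp (-(M:ℝ)*t)))
            Filter.atTop (nhds (∑ i ∈ Finset.range (2*k+1), Lc α (2*k) i * (2*(M:ℝ))^i * 0)) :=
          tendsto_finset_sum _ fun i _ => (each (β+i)).const_mul _
        simpa using this
      simpa using this
    apply big.congr' ?_
    filter_upwards [Filter.eventually_gt_atTop (0:ℝ)] with t ht
    simp only [hψdef]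
    rw [Finset.sum_mul, Finset.sum_mul]
    apply Finset.sum_congr rfl
    intro k _
    rw [Lag_eq (2*k) α (2*(M:ℝ)*t) le_rfl, Finset.mul_sum, Finset.mul_sum, Finset.sum_mul,
      Finset.sum_mul]
    apply Finset.sum_congr rfl
    intro i _
    rw [Real.rpow_add ht, Real.rpow_natCast, mul_pow]
    ring
  -- FTC
  have hcont : ContinuousWithinAt ψ (Set.Ici x) x :=
    (hderiv x hx).continuousAt.continuousWithinAt
  have hFTC := integral_Ioi_of_hasDerivAt_of_tendsto hcont
    (fun t ht => hderiv t (lt_trans hx ht)) hint htend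
  rw [MeasureTheory.integral_const_mul] at hFTC
  show ψ x = -((2*(N:ℝ)-1)/2) * cc α (N-1) * ∫ t in Set.Ioi x, g t
  rw [zero_sub] at hFTC
  rw [hKdef] at hFTC
  linarith [hFTC]
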